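/- arXiv:1812.10367 — 7 statements merged into one kernel-verified Lean document; each statement's English description precedes it below -/
import Mathlib

section
/- With the same setup (Pinkall–Thorbergsson construction), for any z ∈ M_+^t and α, β ∈ {1,...,m}: ⟨Q_α Q_0 z, Q_0 z⟩ = 0, ⟨Q_0 Q_α z, Q_0 z⟩ = 0, ⟨Q_0 Q_0 z, Q_α z⟩ = 0, ⟨Q_α Q_β z, Q_0 z⟩ = 0, ⟨Q_α Q_0 z, Q_β z⟩ = 0, and ⟨Q_0 Q_α z, Q_β z⟩ = -2δ_{αβ} cot 2t. -/
open Matrix Real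

/-- The matrix `Q₀ = diag(tan t · Id, -cot t · Id)` on `ℝ^l ⊕ ℝ^l`. -/
noncomputable def ptQzero (l : ℕ) (t : ℝ) : Matrix (Fin l ⊕ Fin l) (Fin l ⊕ Fin l) ℝ :=
  Matrix.fromBlocks (Real.tan t • 1) 0 0 (-(Real.cot t • 1))

lemma pt_ftr {n : Type*} [Fintype n] (z : n → ℝ) (M : Matrix n n ℝ) :
    z ⬝ᵥ (Mᵀ *ᵥ z) = z ⬝ᵥ (M *ᵥ z) := by
  rw [dotProduct_mulVec, vecMul_transpose, dotProduct_comm]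

lemma pt_red {n : Type*} [Fintype n] (z : n → ℝ) (M C : Matrix n n ℝ) :
    (M *ᵥ z) ⬝ᵥ (C *ᵥ z) = z ⬝ᵥ ((Mᵀ * C) *ᵥ z) := by
  rw [dotProduct_mulVec, dotProduct_mulVec, ← vecMul_vecMul, vecMul_transpose]

lemma pt_master {n : Type*} [Fintype n] [DecidableEq n] (z : n → ℝ)
    (Q0 P0 A B : Matrix n n ℝ) (a p q δ : ℝ)
    (hQ0 : Q0ᵀ = Q0) (hP0 : P0ᵀ = P0) (hA : Aᵀ = A) (hB : Bᵀ = B)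
    (hAQ : Q0 * A + A * Q0 = a • A) (hBQ : Q0 * B + B * Q0 = a • B)
    (hAP : A * P0 + P0 * A = 0)
    (hABBA : A * B + B * A = (2 * δ) • 1)
    (hQsq : Q0 * Q0 = p • 1 + q • P0)
    (hz1 : z ⬝ᵥ z = 1)
    (hzQ : z ⬝ᵥ (Q0 *ᵥ z) = 0)
    (hzA : z ⬝ᵥ (A *ᵥ z) = 0) :
    z ⬝ᵥ ((Q0 * A * Q0) *ᵥ z) = 0 ∧
    z ⬝ᵥ ((A * Q0 * Q0) *ᵥ z) = 0 ∧
    z ⬝ᵥ ((Q0 * Q0 * A) *ᵥ z) = 0 ∧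
    z ⬝ᵥ ((B * A * Q0) *ᵥ z) = 0 ∧
    z ⬝ᵥ ((Q0 * A * B) *ᵥ z) = 0 ∧
    z ⬝ᵥ ((A * Q0 * B) *ᵥ z) = a * δ := by
  have fadd : ∀ M N : Matrix n n ℝ,
      z ⬝ᵥ ((M + N) *ᵥ z) = z ⬝ᵥ (M *ᵥ z) + z ⬝ᵥ (N *ᵥ z) := by
    intro M N; simp [add_mulVec]
  have fsub : ∀ M N : Matrix n n ℝ,
      z ⬝ᵥ ((M - N) *ᵥ z) = z ⬝ᵥ (M *ᵥ z) - z ⬝ᵥ (N *ᵥ z) := by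
    intro M N; simp [sub_mulVec]
  have fsmul : ∀ (c : ℝ) (M : Matrix n n ℝ),
      z ⬝ᵥ ((c • M) *ᵥ z) = c * (z ⬝ᵥ (M *ᵥ z)) := by
    intro c M; simp [smul_mulVec]
  have fone : z ⬝ᵥ ((1 : Matrix n n ℝ) *ᵥ z) = 1 := by rw [one_mulVec]; exact hz1
  have hQA : Q0 * A = a • A - A * Q0 := eq_sub_of_add_eq hAQ
  have hQB : Q0 * B = a • B - B * Q0 := eq_sub_of_add_eq hBQ
  have hAQ' : A * Q0 = a • A - Q0 * A := eq_sub_of_add_eq' hAQ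
  -- f(A*Q0) = 0
  have hfAQ : z ⬝ᵥ ((A * Q0) *ᵥ z) = 0 := by
    have h1 : z ⬝ᵥ ((A * Q0) *ᵥ z) = z ⬝ᵥ ((Q0 * A) *ᵥ z) := by
      calc z ⬝ᵥ ((A * Q0) *ᵥ z) = z ⬝ᵥ ((A * Q0)ᵀ *ᵥ z) := (pt_ftr z _).symm
        _ = z ⬝ᵥ ((Q0 * A) *ᵥ z) := by rw [transpose_mul, hQ0, hA]
    have h2 : z ⬝ᵥ ((Q0 * A + A * Q0) *ᵥ z) = a * (z ⬝ᵥ (A *ᵥ z)) := by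
      rw [hAQ, fsmul]
    rw [fadd, hzA, mul_zero] at h2
    rw [h1] at *; linarith
  -- f(A*P0) = 0
  have hfAP : z ⬝ᵥ ((A * P0) *ᵥ z) = 0 := by
    have h1 : z ⬝ᵥ ((A * P0) *ᵥ z) = z ⬝ᵥ ((P0 * A) *ᵥ z) := by
      calc z ⬝ᵥ ((A * P0) *ᵥ z) = z ⬝ᵥ ((A * P0)ᵀ *ᵥ z) := (pt_ftr z _).symm
        _ = z ⬝ᵥ ((P0 * A) *ᵥ z) := by rw [transpose_mul, hP0, hA]
    have h2 : z ⬝ᵥ ((A * P0 + P0 * A) *ᵥ z) = 0 := by rw [hAP]; simp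
    rw [fadd, h1] at h2; linarith
  -- c2
  have c2 : z ⬝ᵥ ((A * Q0 * Q0) *ᵥ z) = 0 := by
    rw [mul_assoc, hQsq, mul_add, mul_smul_comm, mul_one, mul_smul_comm,
      fadd, fsmul, fsmul, hzA, hfAP]
    ring
  -- c3
  have c3 : z ⬝ᵥ ((Q0 * Q0 * A) *ᵥ z) = 0 := by
    have h : (A * Q0 * Q0)ᵀ = Q0 * Q0 * A := by
      rw [transpose_mul, transpose_mul, hQ0, hA, ← mul_assoc]
    rw [← h, pt_ftr]; exact c2
  -- c1
  have c1 : z ⬝ᵥ ((Q0 * A * Q0) *ᵥ z) = 0 := by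
    have h : Q0 * A * Q0 = a • (A * Q0) - A * Q0 * Q0 := by
      rw [hQA, sub_mul, smul_mul_assoc]
    rw [h, fsub, fsmul, hfAQ, c2]; ring
  -- commutation of Q0 with B*A and A*B
  have hcommBA : Q0 * (B * A) = B * A * Q0 := by
    calc Q0 * (B * A) = (Q0 * B) * A := by rw [mul_assoc]
      _ = (a • B - B * Q0) * A := by rw [hQB]
      _ = a • (B * A) - B * (Q0 * A) := by rw [sub_mul, smul_mul_assoc, mul_assoc]
      _ = a • (B * A) - B * (a • A - A * Q0) := by rw [hQA]
      _ = B * A * Q0 := by rw [mul_sub, mul_smul_comm, ← mul_assoc, sub_sub_cancel]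
  have hcommAB : Q0 * (A * B) = A * B * Q0 := by
    calc Q0 * (A * B) = (Q0 * A) * B := by rw [mul_assoc]
      _ = (a • A - A * Q0) * B := by rw [hQA]
      _ = a • (A * B) - A * (Q0 * B) := by rw [sub_mul, smul_mul_assoc, mul_assoc]
      _ = a • (A * B) - A * (a • B - B * Q0) := by rw [hQB]
      _ = A * B * Q0 := by rw [mul_sub, mul_smul_comm, ← mul_assoc, sub_sub_cancel]
  -- f(A*B) = δ
  have hfAB : z ⬝ᵥ ((A * B) *ᵥ z) = δ := by
    have h1 : z ⬝ᵥ ((A * B) *ᵥ z) = z ⬝ᵥ ((B * A) *ᵥ z) := by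
      calc z ⬝ᵥ ((A * B) *ᵥ z) = z ⬝ᵥ ((A * B)ᵀ *ᵥ z) := (pt_ftr z _).symm
        _ = z ⬝ᵥ ((B * A) *ᵥ z) := by rw [transpose_mul, hA, hB]
    have h2 : z ⬝ᵥ ((A * B + B * A) *ᵥ z) = 2 * δ := by
      rw [hABBA, fsmul, fone]; ring
    rw [fadd, ← h1] at h2; linarith
  -- f(B*A*Q0) in terms of f(A*B*Q0)
  have hBA : B * A = (2 * δ) • 1 - A * B := eq_sub_of_add_eq' hABBA
  have h3 : z ⬝ᵥ ((B * A * Q0) *ᵥ z) =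
      2 * δ * (z ⬝ᵥ (Q0 *ᵥ z)) - z ⬝ᵥ ((A * B * Q0) *ᵥ z) := by
    rw [hBA, sub_mul, smul_mul_assoc, one_mul, fsub, fsmul]
  -- f(A*B*Q0) = 0
  have hfABQ : z ⬝ᵥ ((A * B * Q0) *ᵥ z) = 0 := by
    have h1 : z ⬝ᵥ ((A * B * Q0) *ᵥ z) = z ⬝ᵥ ((Q0 * (B * A)) *ᵥ z) := by
      have ht' : (Q0 * (B * A))ᵀ = A * B * Q0 := by
        rw [transpose_mul, transpose_mul, hQ0, hA, hB]
      rw [← ht', pt_ftr]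
    rw [hcommBA, h3, hzQ] at h1
    linarith
  -- c4
  have c4 : z ⬝ᵥ ((B * A * Q0) *ᵥ z) = 0 := by rw [h3, hzQ, hfABQ]; ring
  -- c5
  have c5 : z ⬝ᵥ ((Q0 * A * B) *ᵥ z) = 0 := by
    rw [mul_assoc, hcommAB]; exact hfABQ
  -- c6
  have c6 : z ⬝ᵥ ((A * Q0 * B) *ᵥ z) = a * δ := by
    have h : A * Q0 * B = a • (A * B) - Q0 * A * B := by
      rw [hAQ', sub_mul, smul_mul_assoc]
    rw [h, fsub, fsmul, hfAB, c5]; ring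
  exact ⟨c1, c2, c3, c4, c5, c6⟩

/-- in the Pinkall–Thorbergsson construction (`Q₀ = diag(tan t, -cot t)`,
`Q_α = P_α` for `α ≥ 1`, from a symmetric Clifford system with `P₀ = diag(Id, -Id)`),
for any `z ∈ M₊ᵗ` and `α, β ∈ {1,...,m}`:
`⟨Q_α Q₀ z, Q₀ z⟩ = 0`, `⟨Q₀ Q_α z, Q₀ z⟩ = 0`, `⟨Q₀ Q₀ z, Q_α z⟩ = 0`,
`⟨Q_α Q_β z, Q₀ z⟩ = 0`, `⟨Q_α Q₀ z, Q_β z⟩ = 0`, and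
`⟨Q₀ Q_α z, Q_β z⟩ = -2 δ_{αβ} cot 2t`. -/
theorem statement5 (l m : ℕ) (t : ℝ) (ht0 : 0 < t) (ht : t ≤ π / 4)
    (P : Fin (m + 1) → Matrix (Fin l ⊕ Fin l) (Fin l ⊕ Fin l) ℝ)
    (hSymm : ∀ α, (P α).IsSymm)
    (hCliff : ∀ α β, P α * P β + P β * P α =
      if α = β then (2 : ℝ) • (1 : Matrix (Fin l ⊕ Fin l) (Fin l ⊕ Fin l) ℝ) else 0)
    (hP0 : P 0 = Matrix.fromBlocks 1 0 0 (-1))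
    (Q : Fin (m + 1) → Matrix (Fin l ⊕ Fin l) (Fin l ⊕ Fin l) ℝ)
    (hQ : Q = fun α => if α = 0 then ptQzero l t else P α)
    (z : Fin l ⊕ Fin l → ℝ)
    (hzx : (fun i => z (Sum.inl i)) ⬝ᵥ (fun i => z (Sum.inl i)) = Real.cos t ^ 2)
    (hzy : (fun i => z (Sum.inr i)) ⬝ᵥ (fun i => z (Sum.inr i)) = Real.sin t ^ 2)
    (hM : ∀ α, z ⬝ᵥ (Q α *ᵥ z) = 0) :
    ∀ α β : Fin (m + 1), α ≠ 0 → β ≠ 0 →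
      (Q α *ᵥ (Q 0 *ᵥ z)) ⬝ᵥ (Q 0 *ᵥ z) = 0 ∧
      (Q 0 *ᵥ (Q α *ᵥ z)) ⬝ᵥ (Q 0 *ᵥ z) = 0 ∧
      (Q 0 *ᵥ (Q 0 *ᵥ z)) ⬝ᵥ (Q α *ᵥ z) = 0 ∧
      (Q α *ᵥ (Q β *ᵥ z)) ⬝ᵥ (Q 0 *ᵥ z) = 0 ∧
      (Q α *ᵥ (Q 0 *ᵥ z)) ⬝ᵥ (Q β *ᵥ z) = 0 ∧
      (Q 0 *ᵥ (Q α *ᵥ z)) ⬝ᵥ (Q β *ᵥ z) =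
        if α = β then -2 * Real.cot (2 * t) else 0 := by
  intro α β hα hβ
  -- basic facts about Q
  have hQ0def : Q 0 = ptQzero l t := by rw [hQ]; simp
  have hQα : Q α = P α := by rw [hQ]; simp [hα]
  have hQβ : Q β = P β := by rw [hQ]; simp [hβ]
  -- trig facts
  have hsin : Real.sin t ≠ 0 :=
    ne_of_gt (Real.sin_pos_of_pos_of_lt_pi ht0 (by linarith [Real.pi_pos]))
  have hcos : Real.cos t ≠ 0 :=
    ne_of_gt (Real.cos_pos_of_mem_Ioo ⟨by linarith [Real.pi_pos], by linarith [Real.pi_pos]⟩)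
  have ha2 : Real.tan t - Real.cot t = -2 * Real.cot (2 * t) := by
    rw [Real.tan_eq_sin_div_cos, Real.cot_eq_cos_div_sin, Real.cot_eq_cos_div_sin,
      Real.sin_two_mul, Real.cos_two_mul']
    field_simp
    ring
  -- decomposition of Q 0
  have hdecomp : Q 0 = ((Real.tan t - Real.cot t)/2) • 1
      + ((Real.tan t + Real.cot t)/2) • P 0 := by
    rw [hQ0def, hP0]
    ext (i|i) (j|j) <;>
      simp [ptQzero, Matrix.one_apply, Matrix.smul_apply, mul_comm] <;>
      · split <;> ring
  have hQ0sym : (Q 0)ᵀ = Q 0 := by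
    rw [hdecomp, transpose_add, transpose_smul, transpose_smul, transpose_one, (hSymm 0).eq]
  -- P 0 squares to one
  have hP0sq : P 0 * P 0 = 1 := by
    have h := hCliff 0 0
    rw [if_pos rfl] at h
    have h2 : (2:ℝ) • (P 0 * P 0) = (2:ℝ) • (1 : Matrix (Fin l ⊕ Fin l) (Fin l ⊕ Fin l) ℝ) := by
      rw [two_smul]; exact h
    exact smul_right_injective _ two_ne_zero h2
  -- anticommutation of Q 0 with P γ
  have hanti : ∀ γ, γ ≠ 0 → Q 0 * P γ + P γ * Q 0 = (Real.tan t - Real.cot t) • P γ := by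
    intro γ hγ
    have h0 : P γ * P 0 + P 0 * P γ = 0 := by simpa [hγ] using hCliff γ 0
    have h1 : P 0 * P γ = -(P γ * P 0) := eq_neg_of_add_eq_zero_right h0
    rw [hdecomp, add_mul, mul_add, smul_mul_assoc, one_mul, smul_mul_assoc, h1,
      mul_smul_comm, mul_one, mul_smul_comm, smul_neg]
    module
  -- Q 0 squared
  have hQsq : Q 0 * Q 0 = ((Real.tan t ^ 2 + Real.cot t ^ 2)/2) • 1
      + ((Real.tan t ^ 2 - Real.cot t ^ 2)/2) • P 0 := by
    rw [hQ0def, hP0, ptQzero, fromBlocks_multiply]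
    ext (i|i) (j|j) <;>
      simp [Matrix.one_apply, Matrix.smul_mul, Matrix.mul_smul, smul_smul,
        neg_mul, mul_neg, neg_neg, mul_comm] <;>
      · split <;> ring
  -- |z|^2 = 1
  have hz1 : z ⬝ᵥ z = 1 := by
    have h : z ⬝ᵥ z = ((fun i => z (Sum.inl i)) ⬝ᵥ fun i => z (Sum.inl i))
        + ((fun i => z (Sum.inr i)) ⬝ᵥ fun i => z (Sum.inr i)) := by
      simp [dotProduct, Fintype.sum_sum_type]
    rw [h, hzx, hzy]
    linarith [Real.sin_sq_add_cos_sq t]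
  -- hypotheses for the master lemma
  have hzA : z ⬝ᵥ (P α *ᵥ z) = 0 := by
    have h := hM α; rw [hQα] at h; exact h
  have hAP : P α * P 0 + P 0 * P α = 0 := by simpa [hα] using hCliff α 0
  have hABBA : P α * P β + P β * P α =
      (2 * (if α = β then (1:ℝ) else 0)) • (1 : Matrix (Fin l ⊕ Fin l) (Fin l ⊕ Fin l) ℝ) := by
    have h := hCliff α β
    split_ifs at h ⊢ with hab
    · rw [h]; norm_num
    · rw [h]; norm_num
  obtain ⟨M1, M2, M3, M4, M5, M6⟩ :=
    pt_master z (Q 0) (P 0) (P α) (P β)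
      (Real.tan t - Real.cot t)
      ((Real.tan t ^ 2 + Real.cot t ^ 2)/2) ((Real.tan t ^ 2 - Real.cot t ^ 2)/2)
      (if α = β then (1:ℝ) else 0)
      hQ0sym (hSymm 0).eq (hSymm α).eq (hSymm β).eq
      (hanti α hα) (hanti β hβ) hAP hABBA hQsq hz1 (hM 0) hzA
  refine ⟨?_, ?_, ?_, ?_, ?_, ?_⟩
  · rw [hQα, mulVec_mulVec, pt_red, transpose_mul, hQ0sym, (hSymm α).eq]
    exact M1
  · rw [hQα, mulVec_mulVec, pt_red, transpose_mul, hQ0sym, (hSymm α).eq]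
    exact M2
  · rw [hQα, mulVec_mulVec, pt_red, transpose_mul, hQ0sym]
    exact M3
  · rw [hQα, hQβ, mulVec_mulVec, pt_red, transpose_mul, (hSymm α).eq, (hSymm β).eq]
    exact M4
  · rw [hQα, hQβ, mulVec_mulVec, pt_red, transpose_mul, hQ0sym, (hSymm α).eq]
    exact M5
  · rw [hQα, hQβ, mulVec_mulVec, pt_red, transpose_mul, hQ0sym, (hSymm α).eq]
    rw [M6, ha2]
    split_ifs <;> ring
end

section
/- Let z ∈ M_+^t in the Pinkall–Thorbergsson construction. Then for 1 ≤ α ≤ m, the vectors Q_0^{-1} Q_α z satisfy ⟨Q_0^{-1} Q_α z, z⟩ = 0, ⟨Q_0^{-1} Q_α z, Q_β z⟩ = 0 for 0 ≤ β ≤ m, and ⟨Q_0^{-1} Q_α z, Q_0^{-1} Q_β z⟩ = δ_{αβ} for 1 ≤ α, β ≤ m. In particular {Q_0^{-1} Q_α z : 1 ≤ α ≤ m} is an orthonormal set contained in the tangent space T_z M_+^t. -/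
/-!
For `α ≠ 0`, `P_α` anticommutes with `P_0 = diag(1, -1)`, so for `α ≠ β` (both nonzero) the
matrices `P_α P_β` and `P_α P_0 P_β` are skew and their quadratic forms vanish, while
`P_α P_0 P_α = -P_0`. Hence for every block-scalar matrix `D = diag(a, b)` and `z = (x, y)`,
`⟨P_α z, D P_β z⟩ = δ_αβ (b |x|² + a |y|²)`: `P_α` exchanges the roles of the two blocks.
Now `Q_0⁻¹ = diag(cot t, -tan t)` and `Q_0⁻² = diag(cot² t, tan² t)`; with `|x|² = cos² t` and
`|y|² = sin² t` these give `-tan t cos² t + cot t sin² t = 0` and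
`tan² t cos² t + cot² t sin² t = 1`.
-/

open Matrix Real

theorem Matrix.dotProduct_mulVec_self_eq_zero_of_transpose_eq_neg {n : Type*} [Fintype n]
    {A : Matrix n n ℝ} (hA : Aᵀ = -A) (z : n → ℝ) : z ⬝ᵥ (A *ᵥ z) = 0 := by
  have h := dotProduct_transpose_mulVec A z z
  rw [hA, neg_mulVec, dotProduct_neg] at h
  linarith

section CliffordSystem

variable {n ι : Type*} [Fintype n] [DecidableEq n] [DecidableEq ι]

structure IsSymmCliffordSystem (P : ι → Matrix n n ℝ) : Prop where
  isSymm : ∀ α, (P α).IsSymm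
  mul_add_mul : ∀ α β, P α * P β + P β * P α = if α = β then (2 : ℝ) • 1 else 0

namespace IsSymmCliffordSystem

variable {P : ι → Matrix n n ℝ} (hP : IsSymmCliffordSystem P)
include hP

theorem mul_self (α : ι) : P α * P α = 1 := by
  have h := hP.mul_add_mul α α
  rw [if_pos rfl, ← two_smul ℝ] at h
  exact smul_right_injective _ two_ne_zero h

theorem mul_comm_of_ne {α β : ι} (h : α ≠ β) : P α * P β = -(P β * P α) :=
  eq_neg_of_add_eq_zero_left ((hP.mul_add_mul α β).trans (if_neg h))

theorem transpose_mul_of_ne {α β : ι} (h : α ≠ β) : (P α * P β)ᵀ = -(P α * P β) := by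
  rw [transpose_mul, (hP.isSymm α).eq, (hP.isSymm β).eq, hP.mul_comm_of_ne h.symm]

theorem transpose_mul_mul_of_ne {α β γ : ι} (hαβ : α ≠ β) (hαγ : α ≠ γ) (hβγ : β ≠ γ) :
    (P α * P γ * P β)ᵀ = -(P α * P γ * P β) := by
  rw [transpose_mul, transpose_mul, (hP.isSymm α).eq, (hP.isSymm β).eq, (hP.isSymm γ).eq,
    hP.mul_comm_of_ne hαγ.symm, mul_neg, ← mul_assoc, hP.mul_comm_of_ne hαβ.symm, neg_mul,
    neg_neg, mul_assoc, hP.mul_comm_of_ne hβγ, mul_neg, ← mul_assoc]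

theorem mulVec_dotProduct_smul_one_add_smul_mulVec {α β γ : ι} (hα : α ≠ γ) (hβ : β ≠ γ)
    (u v : ℝ) (z : n → ℝ) :
    (P α *ᵥ z) ⬝ᵥ ((u • 1 + v • P γ) *ᵥ (P β *ᵥ z)) =
      if α = β then u * (z ⬝ᵥ z) - v * (z ⬝ᵥ (P γ *ᵥ z)) else 0 := by
  rw [dotProduct_comm, ← dotProduct_transpose_mulVec, (hP.isSymm α).eq, mulVec_mulVec,
    mulVec_mulVec]
  simp only [mul_add, add_mul, smul_mul_assoc, mul_smul_comm, mul_one, add_mulVec, smul_mulVec,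
    dotProduct_add, dotProduct_smul, smul_eq_mul]
  split_ifs with hαβ
  · subst hαβ
    have hsandwich : P α * P γ * P α = -P γ := by
      rw [hP.mul_comm_of_ne hα, neg_mul, mul_assoc, hP.mul_self, mul_one]
    rw [hP.mul_self, one_mulVec, hsandwich, neg_mulVec, dotProduct_neg]
    ring
  · rw [dotProduct_mulVec_self_eq_zero_of_transpose_eq_neg (hP.transpose_mul_of_ne hαβ),
      dotProduct_mulVec_self_eq_zero_of_transpose_eq_neg
        (hP.transpose_mul_mul_of_ne hαβ hα hβ)]
    ring

theorem dotProduct_smul_one_add_smul_mulVec {α γ : ι} (hα : α ≠ γ) (u v : ℝ) (z : n → ℝ) :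
    z ⬝ᵥ ((u • 1 + v • P γ) *ᵥ (P α *ᵥ z)) = u * (z ⬝ᵥ (P α *ᵥ z)) := by
  simp only [mulVec_mulVec, add_mul, smul_mul_assoc, one_mul, add_mulVec, smul_mulVec,
    dotProduct_add, dotProduct_smul, smul_eq_mul]
  rw [dotProduct_mulVec_self_eq_zero_of_transpose_eq_neg
      (hP.transpose_mul_of_ne hα.symm), mul_zero, add_zero]

end IsSymmCliffordSystem

end CliffordSystem

def blockScalar (n : Type*) [DecidableEq n] (a b : ℝ) : Matrix (n ⊕ n) (n ⊕ n) ℝ :=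
  diagonal (Sum.elim (fun _ => a) (fun _ => b))

section BlockScalar

variable {n : Type*} [DecidableEq n]

theorem blockScalar_mul_blockScalar [Fintype n] (a b a' b' : ℝ) :
    blockScalar n a b * blockScalar n a' b' = blockScalar n (a * a') (b * b') := by
  rw [blockScalar, blockScalar, blockScalar, diagonal_mul_diagonal]
  congr 1
  ext (i | i) <;> rfl

theorem blockScalar_transpose (a b : ℝ) : (blockScalar n a b)ᵀ = blockScalar n a b :=
  diagonal_transpose _

theorem blockScalar_one_one : blockScalar n 1 1 = 1 := by
  rw [blockScalar, ← diagonal_one]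
  congr 1
  ext (i | i) <;> rfl

theorem blockScalar_eq_smul_one_add_smul (a b : ℝ) :
    blockScalar n a b = ((a + b) / 2) • 1 + ((a - b) / 2) • blockScalar n 1 (-1) := by
  ext (i | i) (j | j) <;> by_cases hij : i = j <;> simp [blockScalar, hij] <;> ring

theorem fromBlocks_smul_one_eq_blockScalar (a b : ℝ) :
    fromBlocks (a • 1 : Matrix n n ℝ) 0 0 (b • 1) = blockScalar n a b := by
  rw [smul_one_eq_diagonal, smul_one_eq_diagonal, fromBlocks_diagonal]
  rfl

theorem dotProduct_blockScalar_mulVec [Fintype n] (a b : ℝ) (z : n ⊕ n → ℝ) :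
    z ⬝ᵥ (blockScalar n a b *ᵥ z) =
      a * ((fun i => z (Sum.inl i)) ⬝ᵥ (fun i => z (Sum.inl i))) +
        b * ((fun i => z (Sum.inr i)) ⬝ᵥ (fun i => z (Sum.inr i))) := by
  simp only [blockScalar, mulVec_diagonal, dotProduct, Fintype.sum_sum_type, Sum.elim_inl,
    Sum.elim_inr, Finset.mul_sum]
  congr 1 <;> exact Finset.sum_congr rfl fun i _ => by ring

end BlockScalar

namespace IsSymmCliffordSystem

variable {n ι : Type*} [Fintype n] [DecidableEq n] [DecidableEq ι]
variable {P : ι → Matrix (n ⊕ n) (n ⊕ n) ℝ} (hP : IsSymmCliffordSystem P)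
variable {γ : ι} (hγ : P γ = blockScalar n 1 (-1))
include hP hγ

theorem mulVec_dotProduct_blockScalar_mulVec {α β : ι} (hα : α ≠ γ) (hβ : β ≠ γ)
    (a b : ℝ) (z : n ⊕ n → ℝ) :
    (P α *ᵥ z) ⬝ᵥ (blockScalar n a b *ᵥ (P β *ᵥ z)) =
      if α = β then b * ((fun i => z (Sum.inl i)) ⬝ᵥ (fun i => z (Sum.inl i))) +
        a * ((fun i => z (Sum.inr i)) ⬝ᵥ (fun i => z (Sum.inr i))) else 0 := by
  have hzz : z ⬝ᵥ z = z ⬝ᵥ (blockScalar n 1 1 *ᵥ z) := by rw [blockScalar_one_one, one_mulVec]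
  rw [blockScalar_eq_smul_one_add_smul, ← hγ, hP.mulVec_dotProduct_smul_one_add_smul_mulVec hα hβ,
    hzz, hγ, dotProduct_blockScalar_mulVec, dotProduct_blockScalar_mulVec]
  split_ifs <;> ring

theorem dotProduct_blockScalar_mulVec_mulVec {α : ι} (hα : α ≠ γ) (a b : ℝ) (z : n ⊕ n → ℝ) :
    z ⬝ᵥ (blockScalar n a b *ᵥ (P α *ᵥ z)) = (a + b) / 2 * (z ⬝ᵥ (P α *ᵥ z)) := by
  rw [blockScalar_eq_smul_one_add_smul, ← hγ, hP.dotProduct_smul_one_add_smul_mulVec hα]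

end IsSymmCliffordSystem

theorem ptQzero_eq_blockScalar (l : ℕ) (t : ℝ) :
    ptQzero l t = blockScalar (Fin l) (tan t) (-cot t) := by
  rw [ptQzero, ← neg_smul, fromBlocks_smul_one_eq_blockScalar]

theorem ptQzero_mul_blockScalar {l : ℕ} {t : ℝ} (hsin : sin t ≠ 0) (hcos : cos t ≠ 0) :
    ptQzero l t * blockScalar (Fin l) (cot t) (-tan t) = 1 := by
  have htan_mul_cot : tan t * cot t = 1 := by
    rw [tan_eq_sin_div_cos, cot_eq_cos_div_sin]
    field_simp
  rw [ptQzero_eq_blockScalar, blockScalar_mul_blockScalar, neg_mul_neg, mul_comm (cot t),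
    htan_mul_cot, blockScalar_one_one]

/-- in the Pinkall–Thorbergsson construction, for `z ∈ M₊ᵗ` and
`1 ≤ α ≤ m`, the vectors `Q₀⁻¹ Q_α z` satisfy `⟨Q₀⁻¹ Q_α z, z⟩ = 0`,
`⟨Q₀⁻¹ Q_α z, Q_β z⟩ = 0` for all `0 ≤ β ≤ m`, and
`⟨Q₀⁻¹ Q_α z, Q₀⁻¹ Q_β z⟩ = δ_{αβ}`; in particular they form an orthonormal set in
the tangent space `T_z M₊ᵗ` (the orthogonal complement of `span{z, Q₀z, ..., Q_m z}`). -/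
theorem statement6 (l m : ℕ) (t : ℝ) (ht0 : 0 < t) (ht : t ≤ π / 4)
    (P : Fin (m + 1) → Matrix (Fin l ⊕ Fin l) (Fin l ⊕ Fin l) ℝ)
    (hSymm : ∀ α, (P α).IsSymm)
    (hCliff : ∀ α β, P α * P β + P β * P α =
      if α = β then (2 : ℝ) • (1 : Matrix (Fin l ⊕ Fin l) (Fin l ⊕ Fin l) ℝ) else 0)
    (hP0 : P 0 = Matrix.fromBlocks 1 0 0 (-1))
    (Q : Fin (m + 1) → Matrix (Fin l ⊕ Fin l) (Fin l ⊕ Fin l) ℝ)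
    (hQ : Q = fun α => if α = 0 then ptQzero l t else P α)
    (z : Fin l ⊕ Fin l → ℝ)
    (hzx : (fun i => z (Sum.inl i)) ⬝ᵥ (fun i => z (Sum.inl i)) = Real.cos t ^ 2)
    (hzy : (fun i => z (Sum.inr i)) ⬝ᵥ (fun i => z (Sum.inr i)) = Real.sin t ^ 2)
    (hM : ∀ α, z ⬝ᵥ (Q α *ᵥ z) = 0) :
    ∀ α : Fin (m + 1), α ≠ 0 →
      ((ptQzero l t)⁻¹ *ᵥ (Q α *ᵥ z)) ⬝ᵥ z = 0 ∧
      (∀ β : Fin (m + 1), ((ptQzero l t)⁻¹ *ᵥ (Q α *ᵥ z)) ⬝ᵥ (Q β *ᵥ z) = 0) ∧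
      (∀ β : Fin (m + 1), β ≠ 0 →
        ((ptQzero l t)⁻¹ *ᵥ (Q α *ᵥ z)) ⬝ᵥ ((ptQzero l t)⁻¹ *ᵥ (Q β *ᵥ z)) =
          if α = β then 1 else 0) := by
  have hsin : sin t ≠ 0 := (sin_pos_of_pos_of_lt_pi ht0 (by linarith [pi_pos])).ne'
  have hcos : cos t ≠ 0 := (cos_pos_of_mem_Ioo ⟨by linarith, by linarith [pi_pos]⟩).ne'
  have hP : IsSymmCliffordSystem P := ⟨hSymm, hCliff⟩
  have hP0' : P 0 = blockScalar (Fin l) 1 (-1) := by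
    rw [hP0, ← fromBlocks_smul_one_eq_blockScalar, one_smul, neg_smul, one_smul]
  have hQ_of_ne : ∀ β, β ≠ 0 → Q β = P β := fun β hβ => by simp [hQ, hβ]
  have hQ0_mul := ptQzero_mul_blockScalar (l := l) hsin hcos
  have hQinv := inv_eq_right_inv hQ0_mul
  have htan : tan t = sin t / cos t := tan_eq_sin_div_cos t
  have hcot : cot t = cos t / sin t := cot_eq_cos_div_sin t
  intro α hα
  rw [hQ_of_ne α hα, hQinv]
  refine ⟨?_, fun β => ?_, fun β hβ => ?_⟩
  · rw [dotProduct_comm, hP.dotProduct_blockScalar_mulVec_mulVec hP0' hα, ← hQ_of_ne α hα, hM,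
      mul_zero]
  · rcases eq_or_ne β 0 with rfl | hβ
    · rw [dotProduct_comm, ← dotProduct_transpose_mulVec, blockScalar_transpose,
        show Q 0 = ptQzero l t by simp [hQ], mulVec_mulVec, mul_eq_one_comm.mp hQ0_mul,
        one_mulVec, dotProduct_comm, ← hQ_of_ne α hα, hM]
    · rw [hQ_of_ne β hβ, dotProduct_comm,
        hP.mulVec_dotProduct_blockScalar_mulVec hP0' hβ hα, hzx, hzy, htan, hcot]
      split_ifs
      · field_simp
        ring
      · rfl
  · rw [hQ_of_ne β hβ, dotProduct_comm, ← dotProduct_transpose_mulVec, blockScalar_transpose,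
      mulVec_mulVec, blockScalar_mul_blockScalar,
      hP.mulVec_dotProduct_blockScalar_mulVec hP0' hα hβ, hzx, hzy, htan, hcot]
    split_ifs
    · field_simp
      linear_combination sin_sq_add_cos_sq t
    · rfl
end

section
/- The scalar curvature of M_+^t ⊂ S^{2l-1}(1) equals S^t = (2l-m-2)(2l-m-3) - 2(l-m-1)(l-1) + (l-m-1)(l-m-2)(tan²t + cot²t); in particular S^t > 0 for all 0 < t ≤ π/4 and S^t ≥ S^{π/4} = 4(l-m-1)(l-m-2) + 2m(l-m-2) + m(m+1). -/
open Real

/-- the scalar curvature of `M₊ᵗ ⊂ S^{2l-1}(1)`, computed via the Gauss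
identity `S = n(n-1) + |H|² - |B|²` with `n = 2l-m-2`, `|H|² = (2(l-m-1)cot 2t)²` and
`|B|² = 2m(l-m-1) + (l-m-1)(tan²t + cot²t)`, equals
`(2l-m-2)(2l-m-3) - 2(l-m-1)(l-1) + (l-m-1)(l-m-2)(tan²t + cot²t)`; in particular it is
positive for `0 < t ≤ π/4` and is bounded below by its value at `t = π/4`, namely
`4(l-m-1)(l-m-2) + 2m(l-m-2) + m(m+1)`. -/
theorem statement10 (l m : ℕ) (hm : 1 ≤ m) (hl : m + 2 ≤ l)
    (t : ℝ) (ht0 : 0 < t) (ht : t ≤ π / 4) :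
    let n : ℝ := 2 * (l : ℝ) - m - 2
    let H2 : ℝ := (2 * ((l : ℝ) - m - 1) * Real.cot (2 * t)) ^ 2
    let B2 : ℝ := 2 * m * ((l : ℝ) - m - 1) +
      ((l : ℝ) - m - 1) * (Real.tan t ^ 2 + Real.cot t ^ 2)
    let S : ℝ := n * (n - 1) + H2 - B2
    S = (2 * (l : ℝ) - m - 2) * (2 * (l : ℝ) - m - 3) -
          2 * ((l : ℝ) - m - 1) * ((l : ℝ) - 1) +
          ((l : ℝ) - m - 1) * ((l : ℝ) - m - 2) * (Real.tan t ^ 2 + Real.cot t ^ 2) ∧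
      0 < S ∧
      S ≥ 4 * ((l : ℝ) - m - 1) * ((l : ℝ) - m - 2) +
            2 * m * ((l : ℝ) - m - 2) + m * (m + 1) := by
  intro n H2 B2 S
  have hpi := Real.pi_pos
  have htlt : t < π / 2 := lt_of_le_of_lt ht (by linarith)
  have hs : 0 < Real.sin t := Real.sin_pos_of_pos_of_lt_pi ht0 (by linarith)
  have hc : 0 < Real.cos t := Real.cos_pos_of_mem_Ioo ⟨by linarith, htlt⟩
  have hcot2 : 2 * Real.cot (2 * t) = Real.cot t - Real.tan t := by
    rw [Real.cot_eq_cos_div_sin, Real.cot_eq_cos_div_sin, Real.tan_eq_sin_div_cos,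
      Real.sin_two_mul, Real.cos_two_mul']
    field_simp
  have htan : 0 < Real.tan t := Real.tan_pos_of_pos_of_lt_pi_div_two ht0 htlt
  have hmul : Real.tan t * Real.cot t = 1 := by
    rw [Real.cot_eq_cos_div_sin, Real.tan_eq_sin_div_cos]
    field_simp
  set T := Real.tan t ^ 2 + Real.cot t ^ 2 with hT
  have hT2 : 2 ≤ T := by nlinarith [sq_nonneg (Real.tan t - Real.cot t)]
  have hH2 : H2 = ((l : ℝ) - m - 1) ^ 2 * (T - 2) := by
    have : H2 = ((l : ℝ) - m - 1) ^ 2 * (2 * Real.cot (2 * t)) ^ 2 := by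
      simp only [H2]; ring
    rw [this, hcot2]; nlinarith [sq_nonneg (Real.cot t - Real.tan t)]
  have hml : (m : ℝ) + 2 ≤ (l : ℝ) := by exact_mod_cast hl
  have hm1 : (1 : ℝ) ≤ (m : ℝ) := by exact_mod_cast hm
  have hSval : S = (2 * (l : ℝ) - m - 2) * (2 * (l : ℝ) - m - 3) -
      2 * ((l : ℝ) - m - 1) * ((l : ℝ) - 1) + ((l : ℝ) - m - 1) * ((l : ℝ) - m - 2) * T := by
    simp only [S, n, B2, hH2]; ring
  have hkey : 0 ≤ ((l : ℝ) - m - 1) * ((l : ℝ) - m - 2) * (T - 2) :=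
    mul_nonneg (mul_nonneg (by linarith) (by linarith)) (by linarith)
  refine ⟨hSval, ?_, ?_⟩
  · rw [hSval]; nlinarith
  · rw [ge_iff_le, hSval]; nlinarith
end

section
/- With β(t) defined by cos 2β(t) = cos 2β(0)·e^{4(l-m-1)t} and T determined by cos 2β(0)·e^{4(l-m-1)T} = 1, the quantity sup|B|²(t) = 2m(l-m-1) + (l-m-1)(tan²β(t) + cot²β(t)) satisfies lim_{t→T} sup|B|²(t)·(T-t) = 1/2. In particular there is a constant C > 0 with sup|B|²(t) ≤ C/(T-t) for all t ∈ [0,T) (type I singularity). -/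
/-!
Writing `s = T - t`, the defining relations give `cos 2β(t) = e^{-4ks}` with `k = l - m - 1`,
so `tan²β = (1 - e^{-4ks}) / (1 + e^{-4ks}) ∈ [0, 1]` while `k s cot²β = φ(4ks) / 4` with
`φ(x) = x coth (x / 2)`. Hence `sup|B|²(t) (T - t)` is squeezed between `φ(4ks) / 4` and
`(2m + 1) k s + φ(4ks) / 4`, and both tend to `φ(0⁺) / 4 = 1 / 2`. The type I bound follows from
`φ(x) ≤ 2 + x`, which is `1 + x ≤ e^x`.
-/

open Real Filter Set Topology

theorem tan_sq_eq_one_sub_cos_two_mul_div (x : ℝ) :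
    tan x ^ 2 = (1 - cos (2 * x)) / (1 + cos (2 * x)) := by
  rw [tan_eq_sin_div_cos, div_pow, sin_sq_eq_half_sub, cos_sq x, ← sub_div, ← add_div,
    div_div_div_cancel_right₀ two_ne_zero]

theorem cot_sq_eq_one_add_cos_two_mul_div (x : ℝ) :
    cot x ^ 2 = (1 + cos (2 * x)) / (1 - cos (2 * x)) := by
  rw [cot_eq_cos_div_sin, div_pow, sin_sq_eq_half_sub, cos_sq x, ← sub_div, ← add_div,
    div_div_div_cancel_right₀ two_ne_zero]

theorem tan_sq_le_one_of_cos_two_mul_nonneg {x : ℝ} (h : 0 ≤ cos (2 * x)) : tan x ^ 2 ≤ 1 := by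
  rw [tan_sq_eq_one_sub_cos_two_mul_div]
  exact div_le_one_of_le₀ (by linarith) (by linarith)

theorem mul_exp_eq_exp_neg_mul_sub {a r T : ℝ} (h : a * exp (r * T) = 1) (t : ℝ) :
    a * exp (r * t) = exp (-(r * (T - t))) := by
  rw [eq_inv_of_mul_eq_one_left h, ← exp_neg, ← exp_add]
  ring_nf

theorem tendsto_div_one_sub_exp_neg :
    Tendsto (fun x => x / (1 - exp (-x))) (𝓝[≠] 0) (𝓝 1) := by
  have hderiv : HasDerivAt (fun x => 1 - exp (-x)) 1 0 := by
    simpa using ((hasDerivAt_neg 0).exp).const_sub 1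
  simpa [div_eq_inv_mul] using
    (hasDerivAt_iff_tendsto_slope_zero.mp hderiv).inv₀ one_ne_zero

/-- `x coth (x / 2)`. -/
noncomputable def mulCothHalf (x : ℝ) : ℝ := x * (1 + exp (-x)) / (1 - exp (-x))

theorem tendsto_mulCothHalf : Tendsto mulCothHalf (𝓝[≠] 0) (𝓝 2) := by
  have hexp : Tendsto (fun x => 1 + exp (-x)) (𝓝[≠] 0) (𝓝 2) := by
    have : Continuous fun x => 1 + exp (-x) := by fun_prop
    simpa [one_add_one_eq_two] using (this.tendsto 0).mono_left nhdsWithin_le_nhds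
  have := hexp.mul tendsto_div_one_sub_exp_neg
  rw [mul_one] at this
  exact this.congr fun x => by rw [mulCothHalf]; ring

theorem tendsto_mulCothHalf_mul_sub {c T : ℝ} (hc : c ≠ 0) :
    Tendsto (fun t => mulCothHalf (c * (T - t))) (𝓝[≠] T) (𝓝 2) := by
  refine tendsto_mulCothHalf.comp <|
    tendsto_nhdsWithin_iff.mpr ⟨?_, eventually_nhdsWithin_of_forall fun t ht => ?_⟩
  · have : Continuous fun t => c * (T - t) := by fun_prop
    simpa using (this.tendsto T).mono_left nhdsWithin_le_nhds
  · exact mul_ne_zero hc (sub_ne_zero.mpr (Ne.symm ht))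

theorem tendsto_mul_sub_add_mulCothHalf (c : ℝ) {k T : ℝ} (hk : k ≠ 0) :
    Tendsto (fun t => c * (T - t) + mulCothHalf (4 * k * (T - t)) / 4) (𝓝[<] T)
      (𝓝 (1 / 2)) := by
  have hlin : Tendsto (fun t => c * (T - t)) (𝓝[<] T) (𝓝 0) := by
    have : Continuous fun t => c * (T - t) := by fun_prop
    exact (this.tendsto' T 0 (by simp)).mono_left nhdsWithin_le_nhds
  have hcoth := ((tendsto_mulCothHalf_mul_sub (T := T) (by positivity : 4 * k ≠ 0)).mono_left
    (nhdsWithin_mono T fun t ht => ne_of_lt ht)).div_const 4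
  convert hlin.add hcoth using 2
  norm_num

theorem mulCothHalf_le {x : ℝ} (hx : 0 < x) : mulCothHalf x ≤ 2 + x := by
  have hexp : exp (-x) * exp x = 1 := by rw [← exp_add, neg_add_cancel, exp_zero]
  have hlt : exp (-x) < 1 := exp_lt_one_iff.mpr (by linarith)
  rw [mulCothHalf, div_le_iff₀ (by linarith)]
  nlinarith [add_one_le_exp x, exp_pos (-x)]

theorem add_mul_tan_sq_add_cot_sq_mul_mem_Icc {a k s y : ℝ}
    (ha : 0 ≤ a) (hk : 0 ≤ k) (hs : 0 ≤ s) (hy : cos (2 * y) = exp (-(4 * k * s))) :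
    (a + k * (tan y ^ 2 + cot y ^ 2)) * s ∈
      Icc (mulCothHalf (4 * k * s) / 4) ((a + k) * s + mulCothHalf (4 * k * s) / 4) := by
  have hcot : 4 * k * s * cot y ^ 2 = mulCothHalf (4 * k * s) := by
    rw [cot_sq_eq_one_add_cos_two_mul_div, hy, mulCothHalf, mul_div_assoc]
  have htan : tan y ^ 2 ≤ 1 := tan_sq_le_one_of_cos_two_mul_nonneg (hy ▸ (exp_pos _).le)
  rw [← hcot]
  refine ⟨?_, ?_⟩
  · nlinarith [mul_nonneg (mul_nonneg hk (sq_nonneg (tan y))) hs, mul_nonneg ha hs]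
  · nlinarith [mul_nonneg (mul_nonneg hk (sub_nonneg.mpr htan)) hs]

theorem statement13_general (l m : ℕ) (hl : m + 2 ≤ l) (β : ℝ → ℝ) (T : ℝ)
    (hT0 : 0 < T)
    (hdef : ∀ t < T, Real.cos (2 * β t) =
      Real.cos (2 * β 0) * Real.exp (4 * ((l : ℝ) - m - 1) * t))
    (hT : Real.cos (2 * β 0) * Real.exp (4 * ((l : ℝ) - m - 1) * T) = 1) :
    let supB : ℝ → ℝ := fun t => 2 * m * ((l : ℝ) - m - 1) +
      ((l : ℝ) - m - 1) * (Real.tan (β t) ^ 2 + Real.cot (β t) ^ 2)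
    Filter.Tendsto (fun t => supB t * (T - t)) (nhdsWithin T (Set.Iio T))
        (nhds (1 / 2)) ∧
      ∃ C > 0, ∀ t ∈ Set.Ico 0 T, supB t ≤ C / (T - t) := by
  intro supB
  set k : ℝ := (l : ℝ) - m - 1
  have hk : 0 < k := by
    have : (m + 2 : ℝ) ≤ l := by exact_mod_cast hl
    linarith
  have hbounds (t : ℝ) (ht : t < T) :=
    add_mul_tan_sq_add_cot_sq_mul_mem_Icc (a := 2 * m * k) (by positivity)
      hk.le (sub_pos.mpr ht).le (by rw [hdef t ht, mul_exp_eq_exp_neg_mul_sub hT])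
  refine ⟨tendsto_of_tendsto_of_tendsto_of_le_of_le'
    (by simpa using tendsto_mul_sub_add_mulCothHalf 0 hk.ne')
    (tendsto_mul_sub_add_mulCothHalf _ hk.ne')
    (eventually_nhdsWithin_of_forall fun t ht => (hbounds t ht).1)
    (eventually_nhdsWithin_of_forall fun t ht => (hbounds t ht).2), ?_⟩
  refine ⟨(2 * m * k + 2 * k) * T + 1 / 2, by positivity, fun t ⟨ht0, htT⟩ => ?_⟩
  rw [le_div_iff₀ (sub_pos.mpr htT)]
  have := mulCothHalf_le (x := 4 * k * (T - t)) (by nlinarith)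
  nlinarith [(hbounds t htT).2, mul_nonneg (by positivity : (0 : ℝ) ≤ 2 * m * k + 2 * k) ht0]

/-- with `β(t)` defined by `cos 2β(t) = cos 2β(0)·e^{4(l-m-1)t}` and `T`
determined by `cos 2β(0)·e^{4(l-m-1)T} = 1`, the quantity
`sup|B|²(t) = 2m(l-m-1) + (l-m-1)(tan²β(t) + cot²β(t))` satisfies
`lim_{t→T⁻} sup|B|²(t)·(T-t) = 1/2`; in particular there is a constant `C > 0` with
`sup|B|²(t) ≤ C/(T-t)` for all `t ∈ [0, T)` (type I singularity). -/
theorem statement13 (l m : ℕ) (hl : m + 2 ≤ l) (β : ℝ → ℝ) (T : ℝ)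
    (hβ0 : β 0 ∈ Set.Ioo 0 (π / 4))
    (hT0 : 0 < T)
    (hrange : ∀ t < T, β t ∈ Set.Ioo 0 (π / 4))
    (hdef : ∀ t < T, Real.cos (2 * β t) =
      Real.cos (2 * β 0) * Real.exp (4 * ((l : ℝ) - m - 1) * t))
    (hT : Real.cos (2 * β 0) * Real.exp (4 * ((l : ℝ) - m - 1) * T) = 1) :
    let supB : ℝ → ℝ := fun t => 2 * m * ((l : ℝ) - m - 1) +
      ((l : ℝ) - m - 1) * (Real.tan (β t) ^ 2 + Real.cot (β t) ^ 2)
    Filter.Tendsto (fun t => supB t * (T - t)) (nhdsWithin T (Set.Iio T))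
        (nhds (1 / 2)) ∧
      ∃ C > 0, ∀ t ∈ Set.Ico 0 T, supB t ≤ C / (T - t) :=
  statement13_general l m hl β T hT0 hdef hT
end

section
/- The map F(x,y;t) = (√2 cos β(t) x, √2 sin β(t) y) from M_+ × (-∞,T) to S^{2l-1}(1), where cos 2β(t) = cos 2β(0) e^{4(l-m-1)t}, satisfies the mean curvature flow equation ∂F/∂t = H|_{F(x,y;t)}, where H|_{F(x,y;t)} = 2√2 (l-m-1) cot 2β(t) · (sin β(t) x, -cos β(t) y) is the mean curvature vector of M_+^{β(t)} at F(x,y;t). -/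
open Real Matrix

/-- the map `F(x,y;t) = (√2 cos β(t) x, √2 sin β(t) y)`, with `(x,y) ∈ M₊`
and `β' = -2(l-m-1) cot 2β`, satisfies the mean curvature flow equation
`∂F/∂t = H|_{F(x,y;t)}` where
`H|_{F(x,y;t)} = 2√2 (l-m-1) cot 2β(t) · (sin β(t) x, -cos β(t) y)` is the mean curvature
vector of `M₊^{β(t)}` at `F(x,y;t)`. -/
theorem statement14 (l k m : ℕ) (hl : m + 2 ≤ l)
    (E : Fin k → Matrix (Fin l) (Fin l) ℝ)
    (hEorth : ∀ a, (E a)ᵀ * E a = 1)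
    (hEcliff : ∀ a b, E a * E b + E b * E a =
      if a = b then (-2 : ℝ) • (1 : Matrix (Fin l) (Fin l) ℝ) else 0)
    (x y : Fin l → ℝ)
    (hx : x ⬝ᵥ x = 1 / 2) (hy : y ⬝ᵥ y = 1 / 2) (hxy : x ⬝ᵥ y = 0)
    (hxEy : ∀ a, x ⬝ᵥ (E a *ᵥ y) = 0)
    (β : ℝ → ℝ) (T : ℝ)
    (hrange : ∀ t < T, β t ∈ Set.Ioo 0 (π / 4))
    (hODE : ∀ t < T, HasDerivAt β (-2 * ((l : ℝ) - m - 1) * Real.cot (2 * β t)) t) :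
    ∀ t < T, ∀ i : Fin l ⊕ Fin l,
      HasDerivAt
        (fun s => Sum.elim (fun j => Real.sqrt 2 * Real.cos (β s) * x j)
          (fun j => Real.sqrt 2 * Real.sin (β s) * y j) i)
        (2 * Real.sqrt 2 * ((l : ℝ) - m - 1) * Real.cot (2 * β t) *
          Sum.elim (fun j => Real.sin (β t) * x j)
            (fun j => -Real.cos (β t) * y j) i) t := by
  intro t ht i
  have hβ := hODE t ht
  cases i with
  | inl j =>
    have h := ((hβ.cos.const_mul (Real.sqrt 2)).mul_const (x j))
    simpa using h.congr_deriv (by ring)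
  | inr j =>
    have h := ((hβ.sin.const_mul (Real.sqrt 2)).mul_const (y j))
    simpa using h.congr_deriv (by ring)
end

section
/- As t → T, the mean curvature flow F(x,y;t) = (√2 cos β(t) x, √2 sin β(t) y) with cos 2β(t) = cos 2β(0) e^{4(l-m-1)t} converges pointwise to (√2 x, 0), i.e., F(M_+, t) converges to the round sphere S^{l-1}(1) = {(x,0) ∈ ℝ^{2l} : |x| = 1}; and as t → -∞, F(x,y;t) converges to (x,y) ∈ M_+. -/
open Real Matrix Filter

/-!
The defining relation pins `β t ∈ (0, π/4)` down as `arccos (cos 2β(0) e^{4(l-m-1)t}) / 2`,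
which is continuous in `t`. Since `l - m - 1 > 0`, the argument of `arccos` tends to `1` as
`t → T⁻` and to `0` as `t → -∞`, so `β` tends to `0` and to `π/4` respectively; with
`√2 cos (π/4) = √2 sin (π/4) = 1` this gives both limits of `F`.
-/

lemma tendsto_of_cos_two_mul_eq {α : Type*} {l : Filter α} {β f : α → ℝ} {c : ℝ}
    (hf : Tendsto f l (nhds c)) (hβ : ∀ᶠ t in l, β t ∈ Set.Icc 0 (π / 2))
    (hcos : ∀ᶠ t in l, cos (2 * β t) = f t) :
    Tendsto β l (nhds (arccos c / 2)) := by
  refine (((continuous_arccos.tendsto c).comp hf).div_const 2).congr' ?_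
  filter_upwards [hβ, hcos] with t ⟨h0, hπ⟩ ht
  rw [Function.comp_apply, ← ht, arccos_cos (by linarith) (by linarith)]
  ring

lemma tendsto_const_mul_exp_mul_atBot (c : ℝ) {a : ℝ} (ha : 0 < a) :
    Tendsto (fun t => c * exp (a * t)) atBot (nhds 0) := by
  simpa using (tendsto_exp_atBot.comp (tendsto_id.const_mul_atBot ha)).const_mul c

lemma tendsto_sumElim_mul {α ι : Type*} {l : Filter α} {a b : α → ℝ} {a₀ b₀ : ℝ}
    (ha : Tendsto a l (nhds a₀)) (hb : Tendsto b l (nhds b₀)) (x y : ι → ℝ) :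
    Tendsto (fun t => Sum.elim (fun j => a t * x j) (fun j => b t * y j)) l
      (nhds (Sum.elim (fun j => a₀ * x j) (fun j => b₀ * y j))) := by
  rw [tendsto_pi_nhds]
  rintro (j | j)
  · exact ha.mul_const (x j)
  · exact hb.mul_const (y j)

lemma sqrt_two_mul_cos_pi_div_four : √2 * cos (π / 4) = 1 := by
  rw [cos_pi_div_four, mul_div_assoc', mul_self_sqrt zero_le_two, div_self two_ne_zero]

lemma sqrt_two_mul_sin_pi_div_four : √2 * sin (π / 4) = 1 := by
  rw [sin_pi_div_four, ← cos_pi_div_four, sqrt_two_mul_cos_pi_div_four]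

theorem statement15_general (l m : ℕ) (hl : m + 2 ≤ l)
    (x y : Fin l → ℝ)
    (hx : x ⬝ᵥ x = 1 / 2)
    (β : ℝ → ℝ) (T : ℝ)
    (hrange : ∀ t < T, β t ∈ Set.Ioo 0 (π / 4))
    (hdef : ∀ t < T, Real.cos (2 * β t) =
      Real.cos (2 * β 0) * Real.exp (4 * ((l : ℝ) - m - 1) * t))
    (hT : Real.cos (2 * β 0) * Real.exp (4 * ((l : ℝ) - m - 1) * T) = 1) :
    let F : ℝ → (Fin l ⊕ Fin l → ℝ) := fun t =>
      Sum.elim (fun j => Real.sqrt 2 * Real.cos (β t) * x j)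
        (fun j => Real.sqrt 2 * Real.sin (β t) * y j)
    Filter.Tendsto F (nhdsWithin T (Set.Iio T))
        (nhds (Sum.elim (fun j => Real.sqrt 2 * x j) (fun _ => 0))) ∧
      ((fun j => Real.sqrt 2 * x j) ⬝ᵥ (fun j => Real.sqrt 2 * x j) = 1) ∧
      Filter.Tendsto F Filter.atBot (nhds (Sum.elim x y)) := by
  intro F
  have hrate : 0 < 4 * ((l : ℝ) - m - 1) := by
    have : (m + 2 : ℝ) ≤ l := by exact_mod_cast hl
    linarith
  have hβ_lim : ∀ {L : Filter ℝ} {c : ℝ}, (∀ᶠ t in L, t < T) →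
      Tendsto (fun t => cos (2 * β 0) * exp (4 * ((l : ℝ) - m - 1) * t)) L (nhds c) →
      Tendsto β L (nhds (arccos c / 2)) := fun hT' hf =>
    tendsto_of_cos_two_mul_eq hf
      (hT'.mono fun t ht => Set.Ioo_subset_Icc_self.trans (Set.Icc_subset_Icc_right
        (by linarith [pi_pos])) (hrange t ht))
      (hT'.mono hdef)
  have hβ_T : Tendsto β (nhdsWithin T (Set.Iio T)) (nhds 0) := by
    have hf : Tendsto (fun t => cos (2 * β 0) * exp (4 * ((l : ℝ) - m - 1) * t))
        (nhdsWithin T (Set.Iio T)) (nhds 1) := by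
      have hcont : Continuous fun t => cos (2 * β 0) * exp (4 * ((l : ℝ) - m - 1) * t) := by
        fun_prop
      simpa only [hT] using tendsto_nhdsWithin_of_tendsto_nhds (hcont.tendsto T)
    have h := hβ_lim (L := nhdsWithin T (Set.Iio T)) self_mem_nhdsWithin hf
    rwa [arccos_one, zero_div] at h
  have hβ_atBot : Tendsto β atBot (nhds (π / 4)) := by
    have h := hβ_lim (Iio_mem_atBot T) (tendsto_const_mul_exp_mul_atBot _ hrate)
    rwa [arccos_zero, div_div, show (2 : ℝ) * 2 = 4 by norm_num] at h
  refine ⟨?_, ?_, ?_⟩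
  · simpa using tendsto_sumElim_mul (((continuous_cos.tendsto _).comp hβ_T).const_mul √2)
      (((continuous_sin.tendsto _).comp hβ_T).const_mul √2) x y
  · change (√2 • x) ⬝ᵥ (√2 • x) = 1
    rw [smul_dotProduct, dotProduct_smul, hx, smul_smul, smul_eq_mul,
      mul_self_sqrt zero_le_two]
    norm_num
  · have h := tendsto_sumElim_mul (((continuous_cos.tendsto _).comp hβ_atBot).const_mul √2)
      (((continuous_sin.tendsto _).comp hβ_atBot).const_mul √2) x y
    simp only [Function.comp_apply, sqrt_two_mul_cos_pi_div_four,
      sqrt_two_mul_sin_pi_div_four, one_mul] at h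
    exact h

/-- as `t → T⁻`, the mean curvature flow
`F(x,y;t) = (√2 cos β(t) x, √2 sin β(t) y)`, with
`cos 2β(t) = cos 2β(0) e^{4(l-m-1)t}`, converges to `(√2 x, 0)` — a point of the round
sphere `S^{l-1}(1) = {(x,0) : |x| = 1}`, since `|√2 x| = 1` — and as `t → -∞` it
converges to `(x, y) ∈ M₊`. -/
theorem statement15 (l m : ℕ) (hl : m + 2 ≤ l)
    (x y : Fin l → ℝ)
    (hx : x ⬝ᵥ x = 1 / 2) (hy : y ⬝ᵥ y = 1 / 2) (hxy : x ⬝ᵥ y = 0)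
    (β : ℝ → ℝ) (T : ℝ)
    (hβ0 : β 0 ∈ Set.Ioo 0 (π / 4))
    (hrange : ∀ t < T, β t ∈ Set.Ioo 0 (π / 4))
    (hdef : ∀ t < T, Real.cos (2 * β t) =
      Real.cos (2 * β 0) * Real.exp (4 * ((l : ℝ) - m - 1) * t))
    (hT : Real.cos (2 * β 0) * Real.exp (4 * ((l : ℝ) - m - 1) * T) = 1) :
    let F : ℝ → (Fin l ⊕ Fin l → ℝ) := fun t =>
      Sum.elim (fun j => Real.sqrt 2 * Real.cos (β t) * x j)
        (fun j => Real.sqrt 2 * Real.sin (β t) * y j)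
    Filter.Tendsto F (nhdsWithin T (Set.Iio T))
        (nhds (Sum.elim (fun j => Real.sqrt 2 * x j) (fun _ => 0))) ∧
      ((fun j => Real.sqrt 2 * x j) ⬝ᵥ (fun j => Real.sqrt 2 * x j) = 1) ∧
      Filter.Tendsto F Filter.atBot (nhds (Sum.elim x y)) :=
  statement15_general l m hl x y hx β T hrange hdef hT
end

section
/- Let {P_0,...,P_m} be a symmetric Clifford system on ℝ^{2l}, and for 0 ≤ i ≤ m-1 let M_i = {x ∈ S^{2l-1} : ⟨P_0 x,x⟩ = ... = ⟨P_i x,x⟩ = 0} and f_i: M_i → ℝ, f_i(x) = ⟨P_{i+1}x, x⟩. Then the gradient of f_i on M_i satisfies |∇f_i|² = 4(1 - f_i²); in particular Im(f_i) ⊆ [-1, 1] and the level sets f_i^{-1}(c) for c ∈ (-1,1) are regular. -/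
open Matrix

private lemma symm_dot {n : ℕ} (A : Matrix (Fin n) (Fin n) ℝ) (hA : A.IsSymm)
    (u w : Fin n → ℝ) : (A *ᵥ u) ⬝ᵥ w = u ⬝ᵥ (A *ᵥ w) := by
  rw [dotProduct_mulVec, ← mulVec_transpose, hA.eq, dotProduct_comm]

/-- for a symmetric Clifford system `{P₀,...,P_m}` on `ℝ^{2l}`,
`M_i = {x ∈ S^{2l-1} : ⟨P₀x,x⟩ = ⋯ = ⟨P_i x,x⟩ = 0}` and `f_i(x) = ⟨P_{i+1}x, x⟩`, the
gradient of `f_i` on `M_i` — the projection `v = 2 P_{i+1}x - 2 f_i(x) x` of the ambient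
gradient onto `T_x M_i` — satisfies `|∇f_i|² = v ⬝ v = 4(1 - f_i²)`; in particular
`f_i(x) ∈ [-1, 1]`, and `∇f_i ≠ 0` at points with `f_i(x) ∈ (-1, 1)`, so those level
sets are regular. -/
theorem statement16 (l m : ℕ)
    (P : Fin (m + 1) → Matrix (Fin (2 * l)) (Fin (2 * l)) ℝ)
    (hSymm : ∀ α, (P α).IsSymm)
    (hCliff : ∀ α β, P α * P β + P β * P α =
      if α = β then (2 : ℝ) • (1 : Matrix (Fin (2 * l)) (Fin (2 * l)) ℝ) else 0)
    (i : Fin m) (x : Fin (2 * l) → ℝ) (hx : x ⬝ᵥ x = 1)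
    (hM : ∀ α : Fin (m + 1), α.val ≤ i.val → (P α *ᵥ x) ⬝ᵥ x = 0) :
    let f : ℝ := (P i.succ *ᵥ x) ⬝ᵥ x
    let v : Fin (2 * l) → ℝ := (2 : ℝ) • (P i.succ *ᵥ x) - (2 * f) • x
    v ⬝ᵥ x = 0 ∧
      (∀ α : Fin (m + 1), α.val ≤ i.val → v ⬝ᵥ (P α *ᵥ x) = 0) ∧
      v ⬝ᵥ v = 4 * (1 - f ^ 2) ∧
      f ∈ Set.Icc (-1 : ℝ) 1 ∧
      (f ∈ Set.Ioo (-1 : ℝ) 1 → v ≠ 0) := by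
  intro f v
  have hf : (P i.succ *ᵥ x) ⬝ᵥ x = f := rfl
  -- P_{i+1}² = 1
  have hPP : P i.succ * P i.succ = 1 := by
    have h := hCliff i.succ i.succ
    rw [if_pos rfl] at h
    have : (2:ℝ) • (P i.succ * P i.succ) = (2:ℝ) • (1 : Matrix _ _ ℝ) := by
      rw [two_smul]; exact h
    exact smul_right_injective _ (by norm_num) this
  have hsq : (P i.succ *ᵥ x) ⬝ᵥ (P i.succ *ᵥ x) = 1 := by
    rw [symm_dot _ (hSymm _), mulVec_mulVec, hPP, one_mulVec, hx]
  -- ⟨P_{i+1}x, P_α x⟩ = 0 for α ≤ i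
  have horth : ∀ α : Fin (m + 1), α.val ≤ i.val → (P i.succ *ᵥ x) ⬝ᵥ (P α *ᵥ x) = 0 := by
    intro α hα
    have hne : i.succ ≠ α := by
      intro h; rw [← h] at hα; simp [Fin.val_succ] at hα
    have h := hCliff i.succ α
    rw [if_neg hne] at h
    have e1 : (P i.succ *ᵥ x) ⬝ᵥ (P α *ᵥ x) = x ⬝ᵥ ((P i.succ * P α) *ᵥ x) := by
      rw [symm_dot _ (hSymm _), ← mulVec_mulVec]
    have e2 : (P i.succ *ᵥ x) ⬝ᵥ (P α *ᵥ x) = x ⬝ᵥ ((P α * P i.succ) *ᵥ x) := by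
      rw [dotProduct_comm, symm_dot _ (hSymm α), ← mulVec_mulVec]
    have key : x ⬝ᵥ ((P i.succ * P α + P α * P i.succ) *ᵥ x) = 0 := by
      rw [h, zero_mulVec, dotProduct_zero]
    rw [add_mulVec, dotProduct_add] at key
    linarith
  have h1 : v ⬝ᵥ x = 0 := by
    simp only [v, sub_dotProduct, smul_dotProduct, smul_eq_mul, hf, hx]
    ring
  have h2 : ∀ α : Fin (m + 1), α.val ≤ i.val → v ⬝ᵥ (P α *ᵥ x) = 0 := by
    intro α hα
    simp only [v, sub_dotProduct, smul_dotProduct, smul_eq_mul]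
    rw [horth α hα, dotProduct_comm x, hM α hα]; ring
  have h3 : v ⬝ᵥ v = 4 * (1 - f ^ 2) := by
    simp only [v, sub_dotProduct, dotProduct_sub, smul_dotProduct, dotProduct_smul,
      smul_eq_mul, hsq, hx, hf, dotProduct_comm x (P i.succ *ᵥ x)]
    ring
  have hnn : (0:ℝ) ≤ v ⬝ᵥ v :=
    Finset.sum_nonneg fun j _ => mul_self_nonneg (v j)
  have h4 : f ∈ Set.Icc (-1 : ℝ) 1 := by
    rw [h3] at hnn; constructor <;> nlinarith
  refine ⟨h1, h2, h3, h4, ?_⟩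
  rintro ⟨ha, hb⟩ hv0
  rw [hv0, dotProduct_zero] at h3
  nlinarith
end
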